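/- arXiv:2305.00592 — 11 statements merged into one kernel-verified Lean document; each statement's English description precedes it below -/
import Mathlib

section
/- Let F be a field and let f be an automorphism of the Leibniz algebra L₃ = Lei₃(3,F). Then there exist scalars α₁, α₂, α₃, β₃ ∈ F with α₁ ≠ 0 and α₁ + α₂ ≠ 0 such that f(e₁) = α₁e₁ + α₂e₂ + α₃e₃, f(e₂) = (α₁+α₂)e₂ + β₃e₃, and f(e₃) = (α₁² + α₁α₂)e₃. -/
/-- The bracket of the 3-dimensional Leibniz algebra `L₃ = Lei₃(3,F)` on `F³`:
`[x,y] = x₁(y₁+y₂)·e₃`, i.e. `[e₁,e₁] = [e₁,e₂] = e₃` and all other products of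
basis vectors vanish. -/
def l3b (F : Type*) [Field F] (x y : Fin 3 → F) : Fin 3 → F :=
  ![0, 0, x 0 * (y 0 + y 1)]

/-- The standard basis vector `e₁ = (1,0,0)` of `F³`. -/
def e₁ (F : Type*) [Field F] : Fin 3 → F := ![1, 0, 0]

/-- The standard basis vector `e₂ = (0,1,0)` of `F³`. -/
def e₂ (F : Type*) [Field F] : Fin 3 → F := ![0, 1, 0]

/-- The standard basis vector `e₃ = (0,0,1)` of `F³`. -/
def e₃ (F : Type*) [Field F] : Fin 3 → F := ![0, 0, 1]

/-- An automorphism of `L₃`: a bijective linear map preserving the bracket. -/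
def IsL3Aut {F : Type*} [Field F] (f : (Fin 3 → F) →ₗ[F] (Fin 3 → F)) : Prop :=
  Function.Bijective f ∧ ∀ x y, f (l3b F x y) = l3b F (f x) (f y)

/-- every automorphism `f` of `L₃` has the stated form on the basis:
there are `α₁ α₂ α₃ β₃` with `α₁ ≠ 0`, `α₁ + α₂ ≠ 0` such that
`f(e₁) = α₁e₁ + α₂e₂ + α₃e₃`, `f(e₂) = (α₁+α₂)e₂ + β₃e₃`,
`f(e₃) = (α₁² + α₁α₂)e₃`. -/
theorem aut_form {F : Type*} [Field F] (f : (Fin 3 → F) →ₗ[F] (Fin 3 → F))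
    (hf : IsL3Aut f) :
    ∃ α₁ α₂ α₃ β₃ : F, α₁ ≠ 0 ∧ α₁ + α₂ ≠ 0 ∧
      f (e₁ F) = α₁ • e₁ F + α₂ • e₂ F + α₃ • e₃ F ∧
      f (e₂ F) = (α₁ + α₂) • e₂ F + β₃ • e₃ F ∧
      f (e₃ F) = (α₁ ^ 2 + α₁ * α₂) • e₃ F := by
  obtain ⟨hinj, hbr⟩ := hf
  have decomp : ∀ v : Fin 3 → F, v = v 0 • e₁ F + v 1 • e₂ F + v 2 • e₃ F := by
    intro v; funext i; fin_cases i <;> simp [e₁, e₂, e₃]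
  have b11 : l3b F (e₁ F) (e₁ F) = e₃ F := by
    funext i; fin_cases i <;> simp [l3b, e₁, e₃]
  have b12 : l3b F (e₁ F) (e₂ F) = e₃ F := by
    funext i; fin_cases i <;> simp [l3b, e₁, e₂, e₃]
  have b21 : l3b F (e₂ F) (e₁ F) = 0 := by
    funext i; fin_cases i <;> simp [l3b, e₁, e₂]
  have h11 : f (e₃ F) = l3b F (f (e₁ F)) (f (e₁ F)) := by
    rw [← b11, hbr]
  have h12 : f (e₃ F) = l3b F (f (e₁ F)) (f (e₂ F)) := by
    rw [← b12, hbr]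
  have h21 : (0 : Fin 3 → F) = l3b F (f (e₂ F)) (f (e₁ F)) := by
    rw [← hbr, b21, map_zero]
  have hfe3ne : f (e₃ F) ≠ 0 := by
    intro h
    have h3 : e₃ F = 0 := hinj.1 (by rw [h, map_zero])
    have := congrFun h3 2
    simp [e₃] at this
  have hu : f (e₁ F) 0 * (f (e₁ F) 0 + f (e₁ F) 1) ≠ 0 := by
    intro h
    apply hfe3ne
    have h0 := congrFun h11 0
    have h1 := congrFun h11 1
    have h2 := congrFun h11 2
    simp only [l3b, Matrix.cons_val_zero, Matrix.cons_val_one, Matrix.head_cons,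
      Matrix.cons_val_two, Matrix.tail_cons] at h0 h1 h2
    funext i; fin_cases i
    · show f (e₃ F) 0 = 0; rw [h0]
    · show f (e₃ F) 1 = 0; rw [h1]
    · show f (e₃ F) 2 = 0; rw [h2, h]
  have haz : f (e₁ F) 0 ≠ 0 := fun h => hu (by rw [h, zero_mul])
  have habz : f (e₁ F) 0 + f (e₁ F) 1 ≠ 0 := fun h => hu (by rw [h, mul_zero])
  have hpz : f (e₂ F) 0 = 0 := by
    have h2 := congrFun h21 2
    simp only [l3b] at h2
    have h2' : f (e₂ F) 0 * (f (e₁ F) 0 + f (e₁ F) 1) = 0 := by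
      simpa using h2.symm
    rcases mul_eq_zero.mp h2' with h | h
    · exact h
    · exact absurd h habz
  have hqv : f (e₂ F) 1 = f (e₁ F) 0 + f (e₁ F) 1 := by
    have h2 := (congrFun h11 2).symm.trans (congrFun h12 2)
    simp only [l3b, Matrix.cons_val_two, Matrix.tail_cons, Matrix.head_cons] at h2
    rw [hpz, zero_add] at h2
    rcases mul_left_cancel₀ haz h2 with h
    exact h.symm
  refine ⟨f (e₁ F) 0, f (e₁ F) 1, f (e₁ F) 2, f (e₂ F) 2, haz, habz, decomp _, ?_, ?_⟩
  · conv_lhs => rw [decomp (f (e₂ F))]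
    rw [hpz, hqv]
    funext i; fin_cases i <;> simp [e₁, e₂, e₃]
  · conv_lhs => rw [decomp (f (e₃ F))]
    have h0 := congrFun h11 0
    have h1 := congrFun h11 1
    have h2 := congrFun h11 2
    simp only [l3b, Matrix.cons_val_zero, Matrix.cons_val_one, Matrix.head_cons,
      Matrix.cons_val_two, Matrix.tail_cons] at h0 h1 h2
    rw [h0, h1, h2]
    funext i; fin_cases i <;> simp [e₁, e₂, e₃] <;> ring
end

section
/- Let F be a field and let α₁, α₂, α₃, β₃ ∈ F satisfy α₁ ≠ 0 and α₁ + α₂ ≠ 0. Then the linear map f : F³ → F³ determined by f(e₁) = α₁e₁ + α₂e₂ + α₃e₃, f(e₂) = (α₁+α₂)e₂ + β₃e₃, f(e₃) = (α₁² + α₁α₂)e₃ is an automorphism of the Leibniz algebra L₃ = Lei₃(3,F), i.e., it is bijective and satisfies f([x,y]) = [f(x),f(y)] for all x,y. -/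
/-- if a linear map `f : F³ → F³` satisfies
`f(e₁) = α₁e₁ + α₂e₂ + α₃e₃`, `f(e₂) = (α₁+α₂)e₂ + β₃e₃`,
`f(e₃) = (α₁² + α₁α₂)e₃` with `α₁ ≠ 0` and `α₁ + α₂ ≠ 0`, then `f` is an
automorphism of `L₃` (bijective and bracket-preserving). -/
theorem form_is_aut {F : Type*} [Field F] (α₁ α₂ α₃ β₃ : F)
    (h₁ : α₁ ≠ 0) (h₂ : α₁ + α₂ ≠ 0)
    (f : (Fin 3 → F) →ₗ[F] (Fin 3 → F))
    (hfe₁ : f (e₁ F) = α₁ • e₁ F + α₂ • e₂ F + α₃ • e₃ F)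
    (hfe₂ : f (e₂ F) = (α₁ + α₂) • e₂ F + β₃ • e₃ F)
    (hfe₃ : f (e₃ F) = (α₁ ^ 2 + α₁ * α₂) • e₃ F) :
    IsL3Aut f := by
  have hdecomp : ∀ x : Fin 3 → F, x = x 0 • e₁ F + x 1 • e₂ F + x 2 • e₃ F := by
    intro x
    funext i
    fin_cases i <;> simp [e₁, e₂, e₃]
  have hfx : ∀ x : Fin 3 → F, f x =
      x 0 • (α₁ • e₁ F + α₂ • e₂ F + α₃ • e₃ F)
      + x 1 • ((α₁ + α₂) • e₂ F + β₃ • e₃ F)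
      + x 2 • ((α₁ ^ 2 + α₁ * α₂) • e₃ F) := by
    intro x
    conv_lhs => rw [hdecomp x]
    simp [hfe₁, hfe₂, hfe₃]
  have hcomp : ∀ (x : Fin 3 → F),
      (f x) 0 = α₁ * x 0 ∧ (f x) 1 = α₂ * x 0 + (α₁ + α₂) * x 1 ∧
      (f x) 2 = α₃ * x 0 + β₃ * x 1 + (α₁ ^ 2 + α₁ * α₂) * x 2 := by
    intro x
    rw [hfx x]
    refine ⟨?_, ?_, ?_⟩ <;> simp [e₁, e₂, e₃] <;> ring
  have hinj : Function.Injective f := by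
    rw [← LinearMap.ker_eq_bot, LinearMap.ker_eq_bot']
    intro x hx
    obtain ⟨h0, hone, h3⟩ := hcomp x
    rw [hx] at h0 hone h3
    simp only [Pi.zero_apply] at h0 hone h3
    have hx0 : x 0 = 0 := (mul_eq_zero.mp h0.symm).resolve_left h₁
    have hx1 : x 1 = 0 := by
      rw [hx0, mul_zero, zero_add] at hone
      have := hone.symm
      exact (mul_eq_zero.mp this).resolve_left h₂
    have hx2 : x 2 = 0 := by
      rw [hx0, hx1] at h3
      have h3' : (α₁ ^ 2 + α₁ * α₂) * x 2 = 0 := by linear_combination -h3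
      have hne : α₁ ^ 2 + α₁ * α₂ ≠ 0 := by
        have : α₁ ^ 2 + α₁ * α₂ = α₁ * (α₁ + α₂) := by ring
        rw [this]
        exact mul_ne_zero h₁ h₂
      exact (mul_eq_zero.mp h3').resolve_left hne
    rw [hdecomp x, hx0, hx1, hx2]
    simp
  constructor
  · exact ⟨hinj, (LinearMap.injective_iff_surjective).mp hinj⟩
  · intro x y
    funext i
    obtain ⟨h0x, h1x, h2x⟩ := hcomp x
    obtain ⟨h0y, h1y, h2y⟩ := hcomp y
    obtain ⟨b0, b1, b2⟩ := hcomp (l3b F x y)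
    fin_cases i
    · show f (l3b F x y) 0 = l3b F (f x) (f y) 0
      rw [b0]; simp [l3b]
    · show f (l3b F x y) 1 = l3b F (f x) (f y) 1
      rw [b1]; simp [l3b]
    · show f (l3b F x y) 2 = l3b F (f x) (f y) 2
      rw [b2]; simp only [l3b]
      simp only [Matrix.cons_val_zero, Matrix.cons_val_one, Matrix.head_cons,
        Matrix.cons_val_two, Matrix.tail_cons]
      rw [h0x, h0y, h1y]
      ring
end

section
/- Let F be a field. A bijective linear map f : F³ → F³ is an automorphism of L₃ = Lei₃(3,F) satisfying f(e₁) − e₁ ∈ span{e₂,e₃} if and only if there exist λ, μ, ν ∈ F with 1 + λ ≠ 0 such that f(x₁e₁ + x₂e₂ + x₃e₃) = x₁e₁ + (x₁λ + x₂(1+λ))e₂ + (x₁μ + x₂ν + x₃(1+λ))e₃ for all x₁, x₂, x₃ ∈ F. -/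
lemma vec_decomp {F : Type*} [Field F] (v : Fin 3 → F) :
    v = v 0 • e₁ F + v 1 • e₂ F + v 2 • e₃ F := by
  funext i
  fin_cases i <;> simp [e₁, e₂, e₃]

/-- a bijective linear map `f : F³ → F³` is an automorphism of `L₃`
with `f(e₁) - e₁ ∈ span{e₂,e₃}` iff there are `λ μ ν ∈ F` with `1 + λ ≠ 0` such that
`f(x₁e₁ + x₂e₂ + x₃e₃) = x₁e₁ + (x₁λ + x₂(1+λ))e₂ + (x₁μ + x₂ν + x₃(1+λ))e₃`. -/
theorem mem_S_iff {F : Type*} [Field F] (f : (Fin 3 → F) →ₗ[F] (Fin 3 → F))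
    (hbij : Function.Bijective f) :
    (IsL3Aut f ∧ f (e₁ F) - e₁ F ∈ Submodule.span F {e₂ F, e₃ F}) ↔
      ∃ l μ ν : F, 1 + l ≠ 0 ∧ ∀ x₁ x₂ x₃ : F,
        f (x₁ • e₁ F + x₂ • e₂ F + x₃ • e₃ F) =
          x₁ • e₁ F + (x₁ * l + x₂ * (1 + l)) • e₂ F +
            (x₁ * μ + x₂ * ν + x₃ * (1 + l)) • e₃ F := by
  constructor
  · rintro ⟨⟨hb, haut⟩, hspan⟩
    rw [Submodule.mem_span_pair] at hspan
    obtain ⟨c, d, hcd⟩ := hspan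
    have hfe1 : f (e₁ F) = e₁ F + c • e₂ F + d • e₃ F := by
      have : f (e₁ F) = (c • e₂ F + d • e₃ F) + e₁ F := by
        rw [hcd]; abel
      rw [this]; abel
    have he3 : l3b F (e₁ F) (e₁ F) = e₃ F := by
      funext i; fin_cases i <;> simp [l3b, e₁, e₃]
    have hfe3 : f (e₃ F) = (1 + c) • e₃ F := by
      rw [← he3, haut, hfe1]
      funext i; fin_cases i <;> simp [l3b, e₁, e₂, e₃] <;> ring
    have h1c : (1 : F) + c ≠ 0 := by
      intro h
      have h0 : f (e₃ F) = 0 := by rw [hfe3, h, zero_smul]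
      have : e₃ F = 0 := hb.1 (by rw [h0, map_zero])
      have := congrFun this 2
      simp [e₃] at this
    -- f e₂ components
    set w := f (e₂ F) with hw
    have hb1 : w 0 = 0 := by
      have h1 : f (l3b F (e₂ F) (e₁ F)) = l3b F w (f (e₁ F)) := haut _ _
      have h2 : l3b F (e₂ F) (e₁ F) = 0 := by
        funext i; fin_cases i <;> simp [l3b, e₁, e₂]
      rw [h2, map_zero, hfe1] at h1
      have h3 := congrFun h1.symm 2
      simp [l3b, e₁, e₂, e₃] at h3
      rcases h3 with h | h
      · exact h
      · exact absurd (by linear_combination h) h1c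
    have hb2 : w 1 = 1 + c := by
      have h1 : f (l3b F (e₁ F) (e₂ F)) = l3b F (f (e₁ F)) w := haut _ _
      have h2 : l3b F (e₁ F) (e₂ F) = e₃ F := by
        funext i; fin_cases i <;> simp [l3b, e₁, e₂, e₃]
      rw [h2, hfe3, hfe1] at h1
      have h3 := congrFun h1 2
      simp [l3b, e₁, e₂, e₃, hb1] at h3
      exact h3.symm
    have hfe2 : w = (1 + c) • e₂ F + w 2 • e₃ F := by
      funext i; fin_cases i <;> simp [e₂, e₃, hb1, hb2]
    refine ⟨c, d, w 2, h1c, fun x₁ x₂ x₃ => ?_⟩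
    have hfv : f (x₁ • e₁ F + x₂ • e₂ F + x₃ • e₃ F)
        = x₁ • f (e₁ F) + x₂ • w + x₃ • f (e₃ F) := by
      simp [map_add, map_smul, hw]
    rw [hfv, hfe1, hfe2, hfe3]
    funext i
    fin_cases i <;> simp [e₁, e₂, e₃] <;> ring
  · rintro ⟨l, μ, ν, hl, h⟩
    have key : ∀ v : Fin 3 → F, f v =
        v 0 • e₁ F + (v 0 * l + v 1 * (1 + l)) • e₂ F +
          (v 0 * μ + v 1 * ν + v 2 * (1 + l)) • e₃ F := by
      intro v
      conv_lhs => rw [vec_decomp v]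
      exact h (v 0) (v 1) (v 2)
    refine ⟨⟨hbij, fun x y => ?_⟩, ?_⟩
    · rw [key (l3b F x y), key x, key y]
      funext i
      fin_cases i <;> simp [l3b, e₁, e₂, e₃] <;> ring
    · rw [Submodule.mem_span_pair]
      refine ⟨l, μ, ?_⟩
      rw [key (e₁ F)]
      funext i
      fin_cases i <;> simp [e₁, e₂, e₃]
end

section
/- Let F be a field. The set S of automorphisms f of L₃ = Lei₃(3,F) with f(e₁) − e₁ ∈ span{e₂,e₃} is a normal subgroup of the automorphism group Aut(L₃): it contains the identity, is closed under composition and inverses, and for every automorphism g of L₃ and every f ∈ S the composite g ∘ f ∘ g⁻¹ lies in S. -/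
/-- An automorphism of `L₃`, packaged as a linear equivalence (i.e. a bijective
linear map) preserving the bracket. -/
def IsL3AutE {F : Type*} [Field F] (f : (Fin 3 → F) ≃ₗ[F] (Fin 3 → F)) : Prop :=
  ∀ x y, f (l3b F x y) = l3b F (f x) (f y)

/-- Membership in `S`: automorphisms `f` of `L₃` with `f(e₁) - e₁ ∈ span{e₂,e₃}`. -/
def memS {F : Type*} [Field F] (f : (Fin 3 → F) ≃ₗ[F] (Fin 3 → F)) : Prop :=
  IsL3AutE f ∧ f (e₁ F) - e₁ F ∈ Submodule.span F {e₂ F, e₃ F}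
section Aux
variable {F : Type*} [Field F]

lemma span_e2e3 (v : Fin 3 → F) : v ∈ Submodule.span F {e₂ F, e₃ F} ↔ v 0 = 0 := by
  constructor
  · intro hv
    have hle : Submodule.span F {e₂ F, e₃ F} ≤
        LinearMap.ker (LinearMap.proj 0 : (Fin 3 → F) →ₗ[F] F) := by
      rw [Submodule.span_le]
      rintro x (rfl | rfl) <;> simp [e₂, e₃, LinearMap.mem_ker]
    exact hle hv
  · intro h
    have hv : v = v 1 • e₂ F + v 2 • e₃ F := by
      funext i; fin_cases i <;> simp [e₂, e₃, h]
    rw [hv]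
    exact Submodule.add_mem _
      (Submodule.smul_mem _ _ (Submodule.subset_span (Set.mem_insert _ _)))
      (Submodule.smul_mem _ _ (Submodule.subset_span (Set.mem_insert_of_mem _ rfl)))

lemma memS_iff (f : (Fin 3 → F) ≃ₗ[F] (Fin 3 → F)) :
    memS f ↔ IsL3AutE f ∧ f (e₁ F) 0 = 1 := by
  unfold memS
  rw [span_e2e3]
  have : (f (e₁ F) - e₁ F) 0 = f (e₁ F) 0 - 1 := by simp [e₁]
  rw [this, sub_eq_zero]

lemma aut_coord0 {g : (Fin 3 → F) ≃ₗ[F] (Fin 3 → F)} (hg : IsL3AutE g) (x : Fin 3 → F) :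
    g x 0 = x 0 * g (e₁ F) 0 := by
  set a := g (e₁ F) 0 with ha
  set b := g (e₁ F) 1 with hb
  have he3 : g (e₃ F) = (a * (a + b)) • e₃ F := by
    have h := hg (e₁ F) (e₁ F)
    have h1 : l3b F (e₁ F) (e₁ F) = e₃ F := by funext i; fin_cases i <;> simp [l3b, e₁, e₃]
    rw [h1] at h
    rw [h]; funext i; fin_cases i <;> simp [l3b, e₁, e₃, ha, hb]
  have hab : a * (a + b) ≠ 0 := by
    intro h0
    have hz : g (e₃ F) = g 0 := by rw [he3, h0, zero_smul, map_zero]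
    have he := g.injective hz
    have h2 := congrFun he 2
    simp [e₃] at h2
  have hab' : a + b ≠ 0 := fun h => hab (by rw [h, mul_zero])
  have he2 : g (e₂ F) 0 = 0 := by
    have h := hg (e₂ F) (e₁ F)
    have h1 : l3b F (e₂ F) (e₁ F) = 0 := by funext i; fin_cases i <;> simp [l3b, e₂, e₁]
    rw [h1, map_zero] at h
    have h2 : (0 : Fin 3 → F) 2 = l3b F (g (e₂ F)) (g (e₁ F)) 2 := by rw [← h]
    simp only [l3b, Pi.zero_apply, Matrix.cons_val_two, Matrix.tail_cons, Matrix.head_cons] at h2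
    rcases mul_eq_zero.mp h2.symm with h3 | h3
    · exact h3
    · exact absurd h3 hab'
  have he30 : g (e₃ F) 0 = 0 := by rw [he3]; simp [e₃]
  have hx : x = x 0 • e₁ F + x 1 • e₂ F + x 2 • e₃ F := by
    funext i; fin_cases i <;> simp [e₁, e₂, e₃]
  conv_lhs => rw [hx]
  simp only [map_add, map_smul, Pi.add_apply, Pi.smul_apply, smul_eq_mul, he2, he30, ← ha]
  ring

lemma aut_symm {g : (Fin 3 → F) ≃ₗ[F] (Fin 3 → F)} (hg : IsL3AutE g) : IsL3AutE g.symm := by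
  intro x y
  apply g.injective
  rw [g.apply_symm_apply, hg, g.apply_symm_apply, g.apply_symm_apply]

lemma aut_trans {f g : (Fin 3 → F) ≃ₗ[F] (Fin 3 → F)} (hf : IsL3AutE f) (hg : IsL3AutE g) :
    IsL3AutE (f.trans g) := by
  intro x y
  simp only [LinearEquiv.trans_apply]
  rw [hf, hg]

end Aux

/-- the set `S` of automorphisms `f` of `L₃` with
`f(e₁) - e₁ ∈ span{e₂,e₃}` is a normal subgroup of `Aut(L₃)`: it contains the
identity, is closed under composition and inverses, and is closed under
conjugation `g ∘ f ∘ g⁻¹` by arbitrary automorphisms `g` of `L₃`. -/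
theorem S_normal_subgroup {F : Type*} [Field F] :
    memS (LinearEquiv.refl F (Fin 3 → F)) ∧
    (∀ f g : (Fin 3 → F) ≃ₗ[F] (Fin 3 → F), memS f → memS g → memS (f.trans g)) ∧
    (∀ f : (Fin 3 → F) ≃ₗ[F] (Fin 3 → F), memS f → memS f.symm) ∧
    (∀ g f : (Fin 3 → F) ≃ₗ[F] (Fin 3 → F), IsL3AutE g → memS f →
      memS ((g.symm.trans f).trans g)) := by
  simp only [memS_iff]
  refine ⟨⟨fun x y => rfl, by simp [e₁]⟩, ?_, ?_, ?_⟩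
  · rintro f g ⟨hf, hf1⟩ ⟨hg, hg1⟩
    refine ⟨aut_trans hf hg, ?_⟩
    rw [LinearEquiv.trans_apply, aut_coord0 hg, hf1, hg1, one_mul]
  · rintro f ⟨hf, hf1⟩
    refine ⟨aut_symm hf, ?_⟩
    have h := aut_coord0 hf (f.symm (e₁ F))
    rw [f.apply_symm_apply, hf1, mul_one] at h
    have : (e₁ F) 0 = 1 := by simp [e₁]
    rw [this] at h
    exact h.symm
  · rintro g f hg ⟨hf, hf1⟩
    have hgs := aut_symm hg
    refine ⟨aut_trans (aut_trans hgs hf) hg, ?_⟩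
    simp only [LinearEquiv.trans_apply]
    rw [aut_coord0 hg, aut_coord0 hf, aut_coord0 hgs, hf1, mul_one]
    have h := aut_coord0 hg (g.symm (e₁ F))
    rw [g.apply_symm_apply] at h
    have h1 : (e₁ F) 0 = 1 := by simp [e₁]
    rw [h1] at h
    rw [mul_assoc, ← h, h1, mul_one]
end

section
/- Let F be a field. A bijective linear map f : F³ → F³ is an automorphism of L₃ = Lei₃(3,F) satisfying f(e₁) − e₁ ∈ span{e₃}, f(e₂) − e₂ ∈ span{e₃} and f(e₃) = e₃ if and only if there exist λ, μ ∈ F such that f(x₁e₁ + x₂e₂ + x₃e₃) = x₁e₁ + x₂e₂ + (x₁λ + x₂μ + x₃)e₃ for all x₁, x₂, x₃ ∈ F. -/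
lemma decomp {F : Type*} [Field F] (x : Fin 3 → F) :
    x = x 0 • e₁ F + x 1 • e₂ F + x 2 • e₃ F := by
  funext i
  fin_cases i <;> simp [e₁, e₂, e₃]

lemma l3b_eq {F : Type*} [Field F] (x y : Fin 3 → F) :
    l3b F x y = (x 0 * (y 0 + y 1)) • e₃ F := by
  funext i
  fin_cases i <;> simp [l3b, e₃]

/-- a bijective linear map `f : F³ → F³` is an automorphism of `L₃`
with `f(e₁) - e₁ ∈ span{e₃}`, `f(e₂) - e₂ ∈ span{e₃}` and `f(e₃) = e₃` iff there
are `λ μ ∈ F` such that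
`f(x₁e₁ + x₂e₂ + x₃e₃) = x₁e₁ + x₂e₂ + (x₁λ + x₂μ + x₃)e₃`. -/
theorem mem_T_iff {F : Type*} [Field F] (f : (Fin 3 → F) →ₗ[F] (Fin 3 → F))
    (hbij : Function.Bijective f) :
    (IsL3Aut f ∧ f (e₁ F) - e₁ F ∈ Submodule.span F {e₃ F} ∧
        f (e₂ F) - e₂ F ∈ Submodule.span F {e₃ F} ∧ f (e₃ F) = e₃ F) ↔
      ∃ l μ : F, ∀ x₁ x₂ x₃ : F,
        f (x₁ • e₁ F + x₂ • e₂ F + x₃ • e₃ F) =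
          x₁ • e₁ F + x₂ • e₂ F + (x₁ * l + x₂ * μ + x₃) • e₃ F := by
  constructor
  · rintro ⟨-, h1, h2, h3⟩
    rw [Submodule.mem_span_singleton] at h1 h2
    obtain ⟨l, hl⟩ := h1
    obtain ⟨μ, hμ⟩ := h2
    refine ⟨l, μ, fun x₁ x₂ x₃ => ?_⟩
    have hfe1 : f (e₁ F) = e₁ F + l • e₃ F := by
      rw [hl]; abel
    have hfe2 : f (e₂ F) = e₂ F + μ • e₃ F := by
      rw [hμ]; abel
    simp only [map_add, map_smul, hfe1, hfe2, h3, smul_add, smul_smul]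
    module
  · rintro ⟨l, μ, h⟩
    have key : ∀ x : Fin 3 → F,
        f x = x 0 • e₁ F + x 1 • e₂ F + (x 0 * l + x 1 * μ + x 2) • e₃ F := by
      intro x
      conv_lhs => rw [decomp x]
      exact h _ _ _
    have hc : ∀ (x : Fin 3 → F) (i : Fin 3), (f x) i =
        (x 0 • e₁ F + x 1 • e₂ F + (x 0 * l + x 1 * μ + x 2) • e₃ F) i := by
      intro x i; rw [key]
    refine ⟨⟨hbij, fun x y => ?_⟩, ?_, ?_, ?_⟩
    · rw [l3b_eq, l3b_eq, map_smul]
      have h0x := hc x 0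
      have h0y := hc y 0
      have h1y := hc y 1
      simp [e₁, e₂, e₃] at h0x h0y h1y
      rw [h0x, h0y, h1y]
      congr 1
      rw [key (e₃ F)]
      simp [e₃]
    · rw [key (e₁ F)]
      simp [e₁, e₂, e₃]
      rw [Submodule.mem_span_singleton]
      exact ⟨l, by funext i; fin_cases i <;> simp [e₁, e₂, e₃]⟩
    · rw [key (e₂ F)]
      simp [e₁, e₂, e₃]
      rw [Submodule.mem_span_singleton]
      exact ⟨μ, by funext i; fin_cases i <;> simp [e₁, e₂, e₃]⟩
    · rw [key (e₃ F)]
      simp [e₁, e₂, e₃]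
end

section
/- Let F be a field. For λ, μ ∈ F let z_{λ,μ} : F³ → F³ be the linear map z_{λ,μ}(x₁e₁ + x₂e₂ + x₃e₃) = x₁e₁ + x₂e₂ + (x₁λ + x₂μ + x₃)e₃. Then each z_{λ,μ} is an automorphism of L₃ = Lei₃(3,F), and the map (λ,μ) ↦ z_{λ,μ} is an injective group homomorphism from the direct product of two copies of the additive group of F into Aut(L₃); in particular its image T is a subgroup of Aut(L₃) isomorphic to F₊ × F₊. -/
/-- The linear map `z_{λ,μ} : F³ → F³`,
`z_{λ,μ}(x₁e₁ + x₂e₂ + x₃e₃) = x₁e₁ + x₂e₂ + (x₁λ + x₂μ + x₃)e₃`. -/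
def zmap (F : Type*) [Field F] (l μ : F) : (Fin 3 → F) →ₗ[F] (Fin 3 → F) where
  toFun x := ![x 0, x 1, x 0 * l + x 1 * μ + x 2]
  map_add' x y := by
    funext i
    fin_cases i <;> simp [Pi.add_apply] <;> ring
  map_smul' c x := by
    funext i
    fin_cases i <;> simp [Pi.smul_apply, smul_eq_mul] <;> ring

/-- each `z_{λ,μ}` is an automorphism of `L₃`, and
`(λ,μ) ↦ z_{λ,μ}` is an injective group homomorphism from `F₊ × F₊` (the direct
product of two copies of the additive group of `F`) into `Aut(L₃)`; hence its
image `T` is a subgroup of `Aut(L₃)` isomorphic to `F₊ × F₊`. -/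
theorem zmap_embeds {F : Type*} [Field F] :
    (∀ l μ : F, IsL3Aut (zmap F l μ)) ∧
    (∀ l μ l' μ' : F, (zmap F l μ).comp (zmap F l' μ') = zmap F (l + l') (μ + μ')) ∧
    Function.Injective (fun p : F × F => zmap F p.1 p.2) := by
  have hcomp : ∀ l μ l' μ' : F,
      (zmap F l μ).comp (zmap F l' μ') = zmap F (l + l') (μ + μ') := by
    intro l μ l' μ'
    apply LinearMap.ext
    intro x
    funext i
    fin_cases i <;> simp [zmap] <;> ring
  refine ⟨?_, hcomp, ?_⟩
  · intro l μ
    constructor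
    · have h1 : (zmap F l μ).comp (zmap F (-l) (-μ)) = LinearMap.id := by
        rw [hcomp]
        simp only [add_neg_cancel]
        apply LinearMap.ext
        intro x
        funext i
        fin_cases i <;> simp [zmap]
      have h2 : (zmap F (-l) (-μ)).comp (zmap F l μ) = LinearMap.id := by
        rw [hcomp]
        simp only [neg_add_cancel]
        apply LinearMap.ext
        intro x
        funext i
        fin_cases i <;> simp [zmap]
      exact Function.bijective_iff_has_inverse.mpr
        ⟨zmap F (-l) (-μ),
         fun x => LinearMap.congr_fun h2 x,
         fun x => LinearMap.congr_fun h1 x⟩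
    · intro x y
      funext i
      fin_cases i <;> simp [zmap, l3b] <;> ring
  · intro p q h
    have h1 := congrArg (fun g : (Fin 3 → F) →ₗ[F] (Fin 3 → F) => g ![1,0,0] 2) h
    have h2 := congrArg (fun g : (Fin 3 → F) →ₗ[F] (Fin 3 → F) => g ![0,1,0] 2) h
    simp [zmap] at h1 h2
    exact Prod.ext h1 h2
end

section
/- Let F be a field. The subgroup T = { z_{λ,μ} : λ, μ ∈ F } of Aut(L₃), where z_{λ,μ}(x₁e₁ + x₂e₂ + x₃e₃) = x₁e₁ + x₂e₂ + (x₁λ + x₂μ + x₃)e₃, is normal in Aut(L₃): for every automorphism g of L₃ and all λ, μ ∈ F, there exist λ', μ' ∈ F with g ∘ z_{λ,μ} ∘ g⁻¹ = z_{λ',μ'}. -/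
/-- the subgroup `T = { z_{λ,μ} : λ, μ ∈ F }` is normal in `Aut(L₃)`:
for every automorphism `g` of `L₃` and all `λ, μ ∈ F` there are `λ', μ' ∈ F` with
`g ∘ z_{λ,μ} ∘ g⁻¹ = z_{λ',μ'}`. -/
theorem T_normal {F : Type*} [Field F] (g : (Fin 3 → F) ≃ₗ[F] (Fin 3 → F))
    (hg : IsL3AutE g) (l μ : F) :
    ∃ l' μ' : F, ∀ x, g (zmap F l μ (g.symm x)) = zmap F l' μ' x := by
  set c : F := g (e₃ F) 2 with hc
  have he : l3b F (e₁ F) (e₁ F) = e₃ F := by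
    funext i; fin_cases i <;> simp [l3b, e₁, e₃]
  have hge : g (e₃ F) = l3b F (g (e₁ F)) (g (e₁ F)) := by
    rw [← he, hg]
  have h10 : g (e₃ F) 0 = 0 := by rw [hge]; rfl
  have h11 : g (e₃ F) 1 = 0 := by rw [hge]; rfl
  have h1 : g (e₃ F) = c • e₃ F := by
    funext i
    fin_cases i
    · show g (e₃ F) 0 = (c • e₃ F) 0
      rw [h10]; simp [e₃]
    · show g (e₃ F) 1 = (c • e₃ F) 1
      rw [h11]; simp [e₃]
    · show g (e₃ F) 2 = (c • e₃ F) 2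
      rw [← hc]; simp [e₃]
  have hcne : c ≠ 0 := by
    intro h
    have h2 : g (e₃ F) = g 0 := by rw [h1, h, zero_smul, map_zero]
    have h3 := congrFun (g.injective h2) 2
    simp [e₃] at h3
  have hs3 : g.symm (e₃ F) = c⁻¹ • e₃ F := by
    rw [LinearEquiv.symm_apply_eq, map_smul, h1, smul_smul,
      inv_mul_cancel₀ hcne, one_smul]
  have hdecomp : ∀ v : Fin 3 → F, v = v 0 • e₁ F + v 1 • e₂ F + v 2 • e₃ F := by
    intro v; funext i; fin_cases i <;> simp [e₁, e₂, e₃]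
  refine ⟨c * ((g.symm (e₁ F)) 0 * l + (g.symm (e₁ F)) 1 * μ),
          c * ((g.symm (e₂ F)) 0 * l + (g.symm (e₂ F)) 1 * μ), fun x => ?_⟩
  set y := g.symm x with hy
  have hyd : y = x 0 • g.symm (e₁ F) + x 1 • g.symm (e₂ F) + x 2 • g.symm (e₃ F) := by
    rw [hy]; nth_rewrite 1 [hdecomp x]
    simp [map_add, map_smul]
  have hy0 : y 0 = x 0 * (g.symm (e₁ F)) 0 + x 1 * (g.symm (e₂ F)) 0 := by
    rw [hyd, hs3]
    simp [e₃, Pi.add_apply, Pi.smul_apply, smul_eq_mul]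
  have hy1 : y 1 = x 0 * (g.symm (e₁ F)) 1 + x 1 * (g.symm (e₂ F)) 1 := by
    rw [hyd, hs3]
    simp [e₃, Pi.add_apply, Pi.smul_apply, smul_eq_mul]
  have hzy : zmap F l μ y = y + (y 0 * l + y 1 * μ) • e₃ F := by
    funext i
    fin_cases i <;>
      simp [zmap, e₃, Pi.add_apply, Pi.smul_apply, smul_eq_mul] <;> ring
  have hgy : g y = x := g.apply_symm_apply x
  rw [hzy, map_add, map_smul, h1, hgy]
  funext i
  fin_cases i <;>
    simp [zmap, e₃, Pi.add_apply, Pi.smul_apply, smul_eq_mul, hy0, hy1] <;> ring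
end

section
/- Let F be a field. For each unit σ ∈ F^× let j_σ : F³ → F³ be the linear map with j_σ(e₁) = e₁ + (σ−1)e₂, j_σ(e₂) = σe₂, j_σ(e₃) = σe₃. Then each j_σ is an automorphism of L₃ = Lei₃(3,F), and the map σ ↦ j_σ is an injective group homomorphism from the multiplicative group F^× into Aut(L₃); in particular its image J is a subgroup of Aut(L₃) isomorphic to the multiplicative group of F. -/
/-- The linear map `j_σ : F³ → F³` with `j_σ(e₁) = e₁ + (σ-1)e₂`,
`j_σ(e₂) = σe₂`, `j_σ(e₃) = σe₃`. -/
def jmap (F : Type*) [Field F] (σ : F) : (Fin 3 → F) →ₗ[F] (Fin 3 → F) where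
  toFun x := ![x 0, x 0 * (σ - 1) + x 1 * σ, x 2 * σ]
  map_add' x y := by
    funext i
    fin_cases i <;> simp [Pi.add_apply] <;> ring
  map_smul' c x := by
    funext i
    fin_cases i <;> simp [Pi.smul_apply, smul_eq_mul] <;> ring

/-- for every unit `σ` of `F`, `j_σ` is an automorphism of `L₃`, and
`σ ↦ j_σ` is an injective group homomorphism from the multiplicative group `F^×`
into `Aut(L₃)`; hence its image `J` is a subgroup of `Aut(L₃)` isomorphic to the
multiplicative group of `F`. -/
theorem jmap_embeds {F : Type*} [Field F] :
    (∀ σ : F, σ ≠ 0 → IsL3Aut (jmap F σ)) ∧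
    (∀ σ τ : F, σ ≠ 0 → τ ≠ 0 → (jmap F σ).comp (jmap F τ) = jmap F (σ * τ)) ∧
    (∀ σ τ : F, σ ≠ 0 → τ ≠ 0 → jmap F σ = jmap F τ → σ = τ) := by
  have happ : ∀ (σ : F) (x : Fin 3 → F),
      jmap F σ x = ![x 0, x 0 * (σ - 1) + x 1 * σ, x 2 * σ] := fun _ _ => rfl
  have hcomp : ∀ σ τ : F, (jmap F σ).comp (jmap F τ) = jmap F (σ * τ) := by
    intro σ τ
    apply LinearMap.ext
    intro x
    funext i
    fin_cases i <;> simp [happ, LinearMap.comp_apply] <;> ring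
  refine ⟨?_, fun σ τ _ _ => hcomp σ τ, ?_⟩
  · intro σ hσ
    constructor
    · have h1 : (jmap F σ).comp (jmap F σ⁻¹) = jmap F 1 := by
        rw [hcomp, mul_inv_cancel₀ hσ]
      have h2 : (jmap F σ⁻¹).comp (jmap F σ) = jmap F 1 := by
        rw [hcomp, inv_mul_cancel₀ hσ]
      have hid : ∀ x, jmap F (1 : F) x = x := by
        intro x; funext i; fin_cases i <;> simp [happ]
      constructor
      · intro a b hab
        have := congrArg (jmap F σ⁻¹) hab
        rwa [← LinearMap.comp_apply, ← LinearMap.comp_apply, h2, hid, hid] at this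
      · intro y
        exact ⟨jmap F σ⁻¹ y, by rw [← LinearMap.comp_apply, h1, hid]⟩
    · intro x y
      funext i
      fin_cases i <;> simp [happ, l3b] <;> ring
  · intro σ τ _ _ h
    have := congrFun (congrArg (fun f => (f : (Fin 3 → F) →ₗ[F] (Fin 3 → F)) ![0,0,1]) h) 2
    simpa [happ] using this
end

section
/- Let F be a field. For each unit σ ∈ F^× let d_σ : F³ → F³ be the linear map with d_σ(e₁) = σe₁, d_σ(e₂) = σe₂, d_σ(e₃) = σ²e₃. Then each d_σ is an automorphism of L₃ = Lei₃(3,F), and the map σ ↦ d_σ is an injective group homomorphism from the multiplicative group F^× into Aut(L₃); in particular its image D is a subgroup of Aut(L₃) isomorphic to the multiplicative group of F. -/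
/-- The linear map `d_σ : F³ → F³` with `d_σ(e₁) = σe₁`, `d_σ(e₂) = σe₂`,
`d_σ(e₃) = σ²e₃`. -/
def dmap (F : Type*) [Field F] (σ : F) : (Fin 3 → F) →ₗ[F] (Fin 3 → F) where
  toFun x := ![σ * x 0, σ * x 1, σ ^ 2 * x 2]
  map_add' x y := by
    funext i
    fin_cases i <;> simp [Pi.add_apply] <;> ring
  map_smul' c x := by
    funext i
    fin_cases i <;> simp [Pi.smul_apply, smul_eq_mul] <;> ring

/-- for every unit `σ` of `F`, `d_σ` is an automorphism of `L₃`, and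
`σ ↦ d_σ` is an injective group homomorphism from the multiplicative group `F^×`
into `Aut(L₃)`; hence its image `D` is a subgroup of `Aut(L₃)` isomorphic to the
multiplicative group of `F`. -/
theorem dmap_embeds {F : Type*} [Field F] :
    (∀ σ : F, σ ≠ 0 → IsL3Aut (dmap F σ)) ∧
    (∀ σ τ : F, σ ≠ 0 → τ ≠ 0 → (dmap F σ).comp (dmap F τ) = dmap F (σ * τ)) ∧
    (∀ σ τ : F, σ ≠ 0 → τ ≠ 0 → dmap F σ = dmap F τ → σ = τ) := by
  refine ⟨?_, ?_, ?_⟩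
  · intro σ hσ
    constructor
    · constructor
      · intro x y h
        funext i
        have h0 := congrFun h 0
        have h1 := congrFun h 1
        have h2 := congrFun h 2
        simp [dmap] at h0 h1 h2
        fin_cases i <;> simp <;>
          [exact h0.resolve_right hσ; exact h1.resolve_right hσ;
           exact h2.resolve_right hσ]
      · intro y
        refine ⟨![σ⁻¹ * y 0, σ⁻¹ * y 1, (σ ^ 2)⁻¹ * y 2], ?_⟩
        funext i
        fin_cases i <;> simp [dmap] <;> field_simp
    · intro x y
      funext i
      fin_cases i <;> simp [dmap, l3b] <;> ring
  · intro σ τ hσ hτ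
    ext x i
    fin_cases i <;> simp [dmap] <;> ring
  · intro σ τ hσ hτ h
    have := congrFun (congrArg (fun f => f.toFun (e₁ F)) h) 0
    simpa [dmap, e₁] using this
end

section
/- Let F be a field. Every automorphism f of L₃ = Lei₃(3,F) can be written uniquely as f = s ∘ d_σ, where σ ∈ F^×, d_σ is the automorphism with d_σ(e₁) = σe₁, d_σ(e₂) = σe₂, d_σ(e₃) = σ²e₃, and s is an automorphism with s(e₁) − e₁ ∈ span{e₂,e₃}. In particular, with S the normal subgroup of automorphisms fixing e₁ modulo span{e₂,e₃} and D = { d_σ : σ ∈ F^× }, one has Aut(L₃) = SD and S ∩ D = {id}, so Aut(L₃) is the semidirect product of S by D. -/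
lemma dmap_apply {F : Type*} [Field F] (σ : F) (x : Fin 3 → F) :
    dmap F σ x = ![σ * x 0, σ * x 1, σ ^ 2 * x 2] := rfl

lemma dmap_comp {F : Type*} [Field F] (a b : F) :
    (dmap F a).comp (dmap F b) = dmap F (a * b) := by
  apply LinearMap.ext; intro x; funext i
  fin_cases i <;> simp [dmap_apply] <;> ring

lemma dmap_one {F : Type*} [Field F] : dmap F 1 = LinearMap.id := by
  apply LinearMap.ext; intro x; funext i
  fin_cases i <;> simp [dmap_apply]

lemma mem_span_iff {F : Type*} [Field F] (v : Fin 3 → F) :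
    v ∈ Submodule.span F {e₂ F, e₃ F} ↔ v 0 = 0 := by
  rw [Submodule.mem_span_pair]
  constructor
  · rintro ⟨a, b, rfl⟩
    simp [e₂, e₃]
  · intro h
    refine ⟨v 1, v 2, ?_⟩
    funext i
    fin_cases i <;> simp [e₂, e₃, h]

lemma dmap_aut {F : Type*} [Field F] {σ : F} (hσ : σ ≠ 0) : IsL3Aut (dmap F σ) := by
  constructor
  · have h1 : ∀ x, dmap F σ (dmap F σ⁻¹ x) = x := by
      intro x
      have := congrFun (congrArg (fun g => g.toFun) (dmap_comp σ σ⁻¹)) x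
      simpa [mul_inv_cancel₀ hσ, dmap_one] using this
    have h2 : ∀ x, dmap F σ⁻¹ (dmap F σ x) = x := by
      intro x
      have := congrFun (congrArg (fun g => g.toFun) (dmap_comp σ⁻¹ σ)) x
      simpa [inv_mul_cancel₀ hσ, dmap_one] using this
    exact ⟨Function.LeftInverse.injective h2, Function.RightInverse.surjective h1⟩
  · intro x y
    funext i
    fin_cases i <;> simp [dmap_apply, l3b] <;> ring

/-- every automorphism `f` of `L₃` can be written uniquely as
`f = s ∘ d_σ` with `σ ∈ F^×` and `s` an automorphism satisfying
`s(e₁) - e₁ ∈ span{e₂,e₃}` (i.e. `s ∈ S`); so `Aut(L₃) = SD`, and moreover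
`S ∩ D = {id}`, whence `Aut(L₃)` is the semidirect product of `S` by `D`. -/
theorem aut_eq_SD {F : Type*} [Field F] (f : (Fin 3 → F) →ₗ[F] (Fin 3 → F))
    (hf : IsL3Aut f) :
    (∃! p : ((Fin 3 → F) →ₗ[F] (Fin 3 → F)) × F,
      IsL3Aut p.1 ∧ p.1 (e₁ F) - e₁ F ∈ Submodule.span F {e₂ F, e₃ F} ∧
      p.2 ≠ 0 ∧ f = p.1.comp (dmap F p.2)) ∧
    (∀ σ : F, σ ≠ 0 → (dmap F σ) (e₁ F) - e₁ F ∈ Submodule.span F {e₂ F, e₃ F} →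
      dmap F σ = LinearMap.id) := by
  obtain ⟨hbij, hbr⟩ := hf
  set σ : F := f (e₁ F) 0 with hσdef
  have he3 : l3b F (e₁ F) (e₁ F) = e₃ F := by
    funext i; fin_cases i <;> simp [l3b, e₁, e₃]
  have hσ : σ ≠ 0 := by
    intro h0
    have h3 : f (e₃ F) = l3b F (f (e₁ F)) (f (e₁ F)) := by
      rw [← he3]; exact hbr _ _
    have hz : f (e₃ F) = f 0 := by
      rw [h3, map_zero]
      funext i; fin_cases i <;> simp [l3b, ← hσdef, h0]
    have := hbij.1 hz
    have := congrFun this 2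
    simp [e₃] at this
  have hdinv := dmap_aut (F := F) (inv_ne_zero hσ)
  have hcomp : ∀ (g : (Fin 3 → F) →ₗ[F] (Fin 3 → F)) (τ : F), τ ≠ 0 →
      ((g.comp (dmap F τ⁻¹)).comp (dmap F τ)) = g := by
    intro g τ hτ
    rw [LinearMap.comp_assoc, dmap_comp, inv_mul_cancel₀ hτ, dmap_one,
      LinearMap.comp_id]
  constructor
  · refine ⟨⟨f.comp (dmap F σ⁻¹), σ⟩, ⟨?_, ?_, hσ, ?_⟩, ?_⟩
    · constructor
      · exact hbij.comp hdinv.1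
      · intro x y
        simp only [LinearMap.comp_apply]
        rw [hdinv.2, hbr]
    · rw [mem_span_iff]
      have hd : (dmap F σ⁻¹) (e₁ F) = σ⁻¹ • e₁ F := by
        funext i; fin_cases i <;> simp [dmap_apply, e₁]
      simp only [LinearMap.comp_apply, Pi.sub_apply, hd, map_smul, Pi.smul_apply,
        smul_eq_mul, ← hσdef]
      simp [e₁, inv_mul_cancel₀ hσ]
    · exact (hcomp f σ hσ).symm
    · rintro ⟨t, τ⟩ ⟨⟨tbij, tbr⟩, hspan, hτ, heq⟩
      have hde : ∀ (ρ : F), dmap F ρ (e₁ F) = ρ • e₁ F := by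
        intro ρ; funext i; fin_cases i <;> simp [dmap_apply, e₁]
      have ht1 : t (e₁ F) 0 = 1 := by
        rw [mem_span_iff] at hspan
        have : t (e₁ F) 0 - 1 = 0 := by simpa [e₁] using hspan
        exact sub_eq_zero.mp this
      have hτσ : τ = σ := by
        have : f (e₁ F) = τ • t (e₁ F) := by
          rw [heq]; simp only [LinearMap.comp_apply, hde, map_smul]
        have h0 := congrFun this 0
        simp [← hσdef, ht1] at h0
        exact h0.symm
      have hts : t = f.comp (dmap F σ⁻¹) := by
        rw [heq, hτσ]
        show t = (t ∘ₗ dmap F σ) ∘ₗ dmap F σ⁻¹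
        rw [LinearMap.comp_assoc, dmap_comp, mul_inv_cancel₀ hσ, dmap_one,
          LinearMap.comp_id]
      exact Prod.ext hts hτσ
  · intro τ hτ hmem
    rw [mem_span_iff] at hmem
    have : τ - 1 = 0 := by simpa [dmap_apply, e₁] using hmem
    have : τ = 1 := by rwa [sub_eq_zero] at this
    rw [this, dmap_one]
end

section
/- Let L be a 3-dimensional left Leibniz algebra over a field F which is not a Lie algebra (there exists a ∈ L with [a,a] ≠ 0), is nilpotent of nilpotency class 2 ([x,[y,z]] = 0 for all x,y,z ∈ L, but [L,L] ≠ 0), and whose center ζ(L) = {x : [x,y] = 0 = [y,x] for all y ∈ L} has dimension 2. Then L has a basis a₁, a₂, a₃ such that [a₁,a₁] = a₃ and all other brackets of basis vectors are zero ([a₁,a₂] = [a₁,a₃] = [a₂,a₁] = [a₂,a₂] = [a₂,a₃] = [a₃,a₁] = [a₃,a₂] = [a₃,a₃] = 0); that is, L is isomorphic to Lei₂(3,F). -/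
/-- The center `ζ(L) = {x ∈ L : [x,y] = 0 = [y,x] for all y}` of a Leibniz algebra
with bracket `br`, as a submodule. -/
def leibCenter (F L : Type*) [Field F] [AddCommGroup L] [Module F L]
    (br : L →ₗ[F] L →ₗ[F] L) : Submodule F L where
  carrier := {x : L | ∀ y, br x y = 0 ∧ br y x = 0}
  zero_mem' := by
    intro y
    simp
  add_mem' := by
    intro a b ha hb y
    refine ⟨?_, ?_⟩
    · have h1 := (ha y).1
      have h2 := (hb y).1
      simp [map_add, h1, h2]
    · have h1 := (ha y).2
      have h2 := (hb y).2
      simp [map_add, h1, h2]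
  smul_mem' := by
    intro c a ha y
    refine ⟨?_, ?_⟩
    · have h1 := (ha y).1
      simp [map_smul, h1]
    · have h1 := (ha y).2
      simp [map_smul, h1]

/-! For any `a` with `[a,a] ≠ 0`, the square `[a,a]` is central: `[[a,a],y] = 0` by the Leibniz
identity alone and `[y,[a,a]] = 0` by class 2, while `a` itself is not central. Completing
`[a,a]` to two independent central vectors `z, [a,a]` and putting `a` in front gives a basis
in which every bracket except `[a,a]` has a central factor. -/

open Module

section LinearAlgebra

variable {F V : Type*} [Field F] [AddCommGroup V] [Module F V]

theorem exists_mem_linearIndependent_pair_of_one_lt_finrank {W : Submodule F V}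
    (hW : 1 < finrank F W) {c : V} (hc0 : c ≠ 0) :
    ∃ z ∈ W, LinearIndependent F ![z, c] := by
  have : FiniteDimensional F W := Module.finite_of_finrank_pos (by omega)
  obtain ⟨z, hzW, hz⟩ : ∃ z ∈ W, z ∉ F ∙ c := by
    by_contra! hle
    have := Submodule.finrank_mono (show W ≤ F ∙ c from hle)
    rw [finrank_span_singleton hc0] at this
    omega
  refine ⟨z, hzW, linearIndependent_fin2.mpr ⟨hc0, fun r hr => hz ?_⟩⟩
  exact Submodule.mem_span_singleton.mpr ⟨r, hr⟩

theorem exists_basis_fin_three_of_one_lt_finrank (hV : finrank F V = 3) {W : Submodule F V}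
    (hW : 1 < finrank F W) {a c : V} (ha : a ∉ W) (hc : c ∈ W) (hc0 : c ≠ 0) :
    ∃ b : Basis (Fin 3) F V, b 0 = a ∧ b 2 = c ∧ ∀ i ≠ 0, b i ∈ W := by
  obtain ⟨z, hzW, hzc⟩ := exists_mem_linearIndependent_pair_of_one_lt_finrank hW hc0
  have hspan : Submodule.span F (Set.range ![z, c]) ≤ W := by
    rw [Submodule.span_le, Matrix.range_cons, Matrix.range_cons, Matrix.range_empty]
    simp [Set.insert_subset_iff, hzW, hc]
  have hind : LinearIndependent F ![a, z, c] :=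
    linearIndependent_finCons.mpr ⟨hzc, fun h => ha (hspan h)⟩
  refine ⟨basisOfLinearIndependentOfCardEqFinrank hind (by simp [hV]), ?_, ?_, ?_⟩
  · simp [coe_basisOfLinearIndependentOfCardEqFinrank]
  · simp [coe_basisOfLinearIndependentOfCardEqFinrank]
  · intro i hi
    fin_cases i <;> simp_all [coe_basisOfLinearIndependentOfCardEqFinrank]

end LinearAlgebra

section Leibniz

variable {F L : Type*} [Field F] [AddCommGroup L] [Module F L] {br : L →ₗ[F] L →ₗ[F] L}

theorem br_br_self_left (hleib : ∀ a b c : L, br (br a b) c = br a (br b c) - br b (br a c))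
    (a y : L) : br (br a a) y = 0 := by
  rw [hleib, sub_self]

theorem br_self_mem_leibCenter
    (hleib : ∀ a b c : L, br (br a b) c = br a (br b c) - br b (br a c))
    (hnil : ∀ x y z : L, br x (br y z) = 0) (a : L) : br a a ∈ leibCenter F L br :=
  fun y => ⟨br_br_self_left hleib a y, hnil y a a⟩

theorem notMem_leibCenter_of_br_self_ne_zero {a : L} (ha : br a a ≠ 0) :
    a ∉ leibCenter F L br :=
  fun h => ha (h a).1

end Leibniz

theorem class_two_center_two_general {F L : Type*} [Field F] [AddCommGroup L] [Module F L]
    (br : L →ₗ[F] L →ₗ[F] L)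
    (hleib : ∀ a b c : L, br (br a b) c = br a (br b c) - br b (br a c))
    (hdim : Module.finrank F L = 3)
    (hnotlie : ∃ a : L, br a a ≠ 0)
    (hnil : ∀ x y z : L, br x (br y z) = 0)
    (hcen : Module.finrank F (leibCenter F L br) = 2) :
    ∃ b : Module.Basis (Fin 3) F L, br (b 0) (b 0) = b 2 ∧
      ∀ i j : Fin 3, ¬(i = 0 ∧ j = 0) → br (b i) (b j) = 0 := by
  obtain ⟨a, ha⟩ := hnotlie
  obtain ⟨b, hb0, hb2, hbcen⟩ := exists_basis_fin_three_of_one_lt_finrank hdim (by omega)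
    (notMem_leibCenter_of_br_self_ne_zero ha) (br_self_mem_leibCenter hleib hnil a) ha
  refine ⟨b, by rw [hb0, hb2], fun i j hij => ?_⟩
  by_cases hi : i = 0
  · exact (hbcen j (fun hj => hij ⟨hi, hj⟩) (b i)).2
  · exact (hbcen i hi (b j)).1

/-- a 3-dimensional left Leibniz algebra `L` that is not a Lie
algebra, is nilpotent of class 2, and has 2-dimensional center possesses a basis
`a₁, a₂, a₃` with `[a₁,a₁] = a₃` and all other brackets of basis vectors zero;
i.e. `L ≅ Lei₂(3,F)`. -/
theorem class_two_center_two {F L : Type*} [Field F] [AddCommGroup L] [Module F L]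
    (br : L →ₗ[F] L →ₗ[F] L)
    (hleib : ∀ a b c : L, br (br a b) c = br a (br b c) - br b (br a c))
    (hdim : Module.finrank F L = 3)
    (hnotlie : ∃ a : L, br a a ≠ 0)
    (hnil : ∀ x y z : L, br x (br y z) = 0)
    (hder : ∃ x y : L, br x y ≠ 0)
    (hcen : Module.finrank F (leibCenter F L br) = 2) :
    ∃ b : Module.Basis (Fin 3) F L, br (b 0) (b 0) = b 2 ∧
      ∀ i j : Fin 3, ¬(i = 0 ∧ j = 0) → br (b i) (b j) = 0 :=
  class_two_center_two_general br hleib hdim hnotlie hnil hcen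
end
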